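/- In the feasible-value-constraint scalarization: if x* minimizes w_k*f_k(x) over {x ∈ X : w_i*f_i(x) ≤ w_k*f_k(x̂) for all i ≠ k} where x̂ ∈ X satisfies w_i*f_i(x̂) = w_k*f_k(x̂) for all i, and w_i > 0 for all i, then x* is weakly Pareto optimal for min {f_1, …, f_ℓ} over X. -/
import Mathlib


/-- Feasible-value-constraint scalarization: if `x*` minimizes `w_k*f_k` over the
feasible set `{x ∈ X : wᵢ*fᵢ(x) ≤ w_k*f_k(x̂), i ≠ k}`, where `x̂ ∈ X` satisfies
`wᵢ*fᵢ(x̂) = w_k*f_k(x̂)` for all `i`, and all `wᵢ > 0`, then `x*` is weakly Pareto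
optimal for `min {f_1, …, f_ℓ}` over `X`. -/
theorem stmt_13 {α : Type*} {l : ℕ} (X : Set α) (hX : X.Nonempty)
    (f : Fin l → α → ℝ) (w : Fin l → ℝ) (k : Fin l)
    (hw : ∀ i, 0 < w i) (hsum : ∑ i, w i = 1)
    (xhat : α) (hxhat : xhat ∈ X)
    (hbal : ∀ i, w i * f i xhat = w k * f k xhat)
    (xStar : α) (hxStar : xStar ∈ X)
    (hfeas : ∀ i, i ≠ k → w i * f i xStar ≤ w k * f k xhat)
    (hmin : ∀ x ∈ X, (∀ i, i ≠ k → w i * f i x ≤ w k * f k xhat) →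
      w k * f k xStar ≤ w k * f k x) :
    ¬ ∃ x ∈ X, ∀ i, f i x < f i xStar := by
  rintro ⟨x, hxX, hdom⟩
  have hfeasx : ∀ i, i ≠ k → w i * f i x ≤ w k * f k xhat := by
    intro i hik
    have h1 : w i * f i x < w i * f i xStar :=
      mul_lt_mul_of_pos_left (hdom i) (hw i)
    exact le_of_lt (lt_of_lt_of_le h1 (hfeas i hik))
  have h2 : w k * f k xStar ≤ w k * f k x := hmin x hxX hfeasx
  have h3 : w k * f k x < w k * f k xStar :=
    mul_lt_mul_of_pos_left (hdom k) (hw k)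
  linarith
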